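/- arXiv:1206.3157 — 4 statements merged into one kernel-verified Lean document; each statement's English description precedes it below -/
import Mathlib

section
/- For α, β > 0 and any fixed t ∈ ℝ, the mKdV breather B_{α,β}(t,x) = 2√2 ∂_x [arctan((β/α) sin(α(x+δt)) / cosh(β(x+γt)))], with δ = α²−3β², γ = 3α²−β², satisfies (1/2)∫_ℝ B_{α,β}(t,x)² dx = 4β. -/
/-!
With `θ = α(x + δt)`, `φ = β(x + γt)` and `k = β/α`, the breather is `2√2` times the `x`-derivative
of `arctan (k sin θ / cosh φ)`, and its square is the exact derivative of
`G = 4β (cosh φ sinh φ + k sin θ cos θ) / (cosh² φ + k² sin² θ)`; the identity comes down to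
`sin² + cos² = 1` and `cosh² - sinh² = 1`. Dividing through by `cosh² φ` shows
`G → ±4β` at `±∞`, because `tanh φ → ±1` while `sin θ / cosh φ, cos θ / cosh φ → 0`.
As `B² ≥ 0`, the fundamental theorem of calculus on `ℝ` needs no separate integrability argument,
so `∫ B² = 8β`.
-/

open Real MeasureTheory Filter Topology Set

noncomputable def breather (α β t x : ℝ) : ℝ :=
  2 * Real.sqrt 2 *
    deriv (fun x' : ℝ =>
      Real.arctan ((β / α) * Real.sin (α * (x' + (α ^ 2 - 3 * β ^ 2) * t)) /
        Real.cosh (β * (x' + (3 * α ^ 2 - β ^ 2) * t)))) x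

theorem integral_of_hasDerivAt_of_nonneg_of_tendsto {f f' : ℝ → ℝ} {m n : ℝ}
    (hderiv : ∀ x, HasDerivAt f (f' x) x) (hf' : ∀ x, 0 ≤ f' x)
    (hbot : Tendsto f atBot (𝓝 m)) (htop : Tendsto f atTop (𝓝 n)) :
    ∫ x, f' x = n - m := by
  have hIoi : IntegrableOn f' (Ioi 0) :=
    integrableOn_Ioi_deriv_of_nonneg' (fun x _ => hderiv x) (fun x _ => hf' x) htop
  -- `x ↦ -f (-x)` moves the behaviour of `f` at `-∞` to `+∞`
  have hIio : IntegrableOn f' (Iio 0) := by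
    have hrefl : IntegrableOn (fun x => f' (-x)) (Ioi 0) :=
      integrableOn_Ioi_deriv_of_nonneg' (g := fun x => -f (-x))
        (fun x _ => by simpa using ((hderiv (-x)).comp x (hasDerivAt_neg x)).fun_neg)
        (fun x _ => hf' _) (hbot.comp tendsto_neg_atTop_atBot).neg
    exact (IntegrableOn.comp_neg_Iio (c := (0 : ℝ)) (by rwa [neg_zero])).congr_fun
      (fun x _ => by simp) measurableSet_Iio
  refine integral_of_hasDerivAt_of_tendsto hderiv ?_ hbot htop
  rw [← integrableOn_univ, ← Iic_union_Ioi (a := 0)]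
  exact ((integrableOn_Iic_iff_integrableOn_Iio).mpr hIio).union hIoi

theorem Real.tendsto_cosh_atTop : Tendsto cosh atTop atTop :=
  tendsto_atTop_mono (fun x => by rw [cosh_eq]; linarith [exp_pos (-x)])
    (tendsto_exp_atTop.atTop_div_const two_pos)

theorem Real.tendsto_cosh_atBot : Tendsto cosh atBot atTop := by
  simpa [Function.comp_def] using tendsto_cosh_atTop.comp tendsto_neg_atBot_atTop

theorem Real.tendsto_tanh_atTop : Tendsto tanh atTop (𝓝 1) := by
  have h : ∀ x, tanh x = 1 - exp (-x) / cosh x := fun x => by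
    rw [tanh_eq_sinh_div_cosh, ← cosh_sub_sinh]
    field_simp [(cosh_pos x).ne']
    ring
  rw [funext h]
  simpa using ((tendsto_exp_atBot.comp tendsto_neg_atTop_atBot).div_atTop
    tendsto_cosh_atTop).const_sub 1

theorem Real.tendsto_tanh_atBot : Tendsto tanh atBot (𝓝 (-1)) := by
  simpa [Function.comp_def] using (tendsto_tanh_atTop.comp tendsto_neg_atBot_atTop).neg

theorem tendsto_div_of_abs_le_of_tendsto_atTop {ι : Type*} {l : Filter ι} {f g : ι → ℝ}
    {M : ℝ} (hf : ∀ i, |f i| ≤ M) (hg : Tendsto g l atTop) :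
    Tendsto (fun i => f i / g i) l (𝓝 0) := by
  simpa [div_eq_inv_mul] using (tendsto_inv_atTop_zero.comp hg).zero_mul_isBoundedUnder_le
    (isBoundedUnder_of ⟨M, fun i => by simpa using hf i⟩)

section Breather

variable (α β p q : ℝ)

noncomputable def breatherPotential (x : ℝ) : ℝ :=
  arctan (β / α * sin (α * (x + p)) / cosh (β * (x + q)))

noncomputable def breatherDenom (x : ℝ) : ℝ :=
  cosh (β * (x + q)) ^ 2 + (β / α) ^ 2 * sin (α * (x + p)) ^ 2

noncomputable def breatherPotentialDeriv (x : ℝ) : ℝ :=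
  (β * cos (α * (x + p)) * cosh (β * (x + q)) -
      β ^ 2 / α * sin (α * (x + p)) * sinh (β * (x + q))) / breatherDenom α β p q x

noncomputable def breatherMassPrimitive (x : ℝ) : ℝ :=
  (4 * β * (cosh (β * (x + q)) * sinh (β * (x + q))) +
      4 * β ^ 2 / α * (sin (α * (x + p)) * cos (α * (x + p)))) / breatherDenom α β p q x

variable {α β p q}

theorem breatherDenom_pos (x : ℝ) : 0 < breatherDenom α β p q x := by
  unfold breatherDenom; positivity

theorem hasDerivAt_mul_add (a c x : ℝ) : HasDerivAt (fun x => a * (x + c)) a x := by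
  simpa using ((hasDerivAt_id x).add_const c).const_mul a

theorem hasDerivAt_breatherPotential (hα : α ≠ 0) (x : ℝ) :
    HasDerivAt (breatherPotential α β p q) (breatherPotentialDeriv α β p q x) x := by
  have h := ((((hasDerivAt_mul_add α p x).sin).const_mul (β / α)).fun_div
    (hasDerivAt_mul_add β q x).cosh (cosh_pos _).ne').arctan
  refine h.congr_deriv ?_
  have hD := breatherDenom_pos (α := α) (β := β) (p := p) (q := q) x
  unfold breatherPotentialDeriv breatherDenom at *
  field_simp

theorem hasDerivAt_breatherMassPrimitive (hα : α ≠ 0) (x : ℝ) :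
    HasDerivAt (breatherMassPrimitive α β p q) (8 * breatherPotentialDeriv α β p q x ^ 2) x := by
  have hs := (hasDerivAt_mul_add α p x).sin
  have hc := (hasDerivAt_mul_add α p x).cos
  have hC := (hasDerivAt_mul_add β q x).cosh
  have hS := (hasDerivAt_mul_add β q x).sinh
  have hD : HasDerivAt (breatherDenom α β p q) _ x :=
    (hC.fun_pow 2).fun_add ((hs.fun_pow 2).const_mul _)
  have hDpos := breatherDenom_pos (α := α) (β := β) (p := p) (q := q) x
  have h := (((hC.fun_mul hS).const_mul (4 * β)).fun_add
    ((hs.fun_mul hc).const_mul (4 * β ^ 2 / α))).fun_div hD hDpos.ne'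
  refine h.congr_deriv ?_
  unfold breatherPotentialDeriv breatherDenom at *
  field_simp
  norm_num
  linear_combination 4 * β ^ 2 * (cosh (β * (x + q)) ^ 2 * α ^ 2 + β ^ 2 * sin (α * (x + p)) ^ 2) *
    (cosh_sq_sub_sinh_sq (β * (x + q)) - sin_sq_add_cos_sq (α * (x + p)))

theorem breatherMassPrimitive_eq (x : ℝ) :
    breatherMassPrimitive α β p q x =
      (4 * β * tanh (β * (x + q)) + 4 * β ^ 2 / α *
          (sin (α * (x + p)) / cosh (β * (x + q)) * (cos (α * (x + p)) / cosh (β * (x + q))))) /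
        (1 + (β / α) ^ 2 * (sin (α * (x + p)) / cosh (β * (x + q))) ^ 2) := by
  have hC := cosh_pos (β * (x + q))
  rw [breatherMassPrimitive, breatherDenom, tanh_eq_sinh_div_cosh]
  field_simp

theorem tendsto_breatherMassPrimitive {l : Filter ℝ} {a : ℝ}
    (htanh : Tendsto (fun x => tanh (β * (x + q))) l (𝓝 a))
    (hcosh : Tendsto (fun x => cosh (β * (x + q))) l atTop) :
    Tendsto (breatherMassPrimitive α β p q) l (𝓝 (4 * β * a)) := by
  have hs := tendsto_div_of_abs_le_of_tendsto_atTop (fun x => abs_sin_le_one (α * (x + p))) hcosh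
  have hc := tendsto_div_of_abs_le_of_tendsto_atTop (fun x => abs_cos_le_one (α * (x + p))) hcosh
  have h := ((htanh.const_mul (4 * β)).add ((hs.mul hc).const_mul (4 * β ^ 2 / α))).div
    (((hs.pow 2).const_mul ((β / α) ^ 2)).const_add 1) (by norm_num)
  rw [funext breatherMassPrimitive_eq]
  simpa [Pi.div_def] using h

theorem tendsto_breatherMassPrimitive_atTop (hβ : 0 < β) :
    Tendsto (breatherMassPrimitive α β p q) atTop (𝓝 (4 * β)) := by
  have hφ := (tendsto_atTop_add_const_right _ q tendsto_id).const_mul_atTop hβ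
  simpa using tendsto_breatherMassPrimitive (p := p) (α := α)
    (tendsto_tanh_atTop.comp hφ) (tendsto_cosh_atTop.comp hφ)

theorem tendsto_breatherMassPrimitive_atBot (hβ : 0 < β) :
    Tendsto (breatherMassPrimitive α β p q) atBot (𝓝 (-(4 * β))) := by
  have hφ := (tendsto_atBot_add_const_right _ q tendsto_id).const_mul_atBot hβ
  simpa using tendsto_breatherMassPrimitive (p := p) (α := α)
    (tendsto_tanh_atBot.comp hφ) (tendsto_cosh_atBot.comp hφ)

end Breather

theorem breather_mass (α β : ℝ) (hα : 0 < α) (hβ : 0 < β) (t : ℝ) :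
    (1 / 2) * ∫ x : ℝ, (breather α β t x) ^ 2 = 4 * β := by
  set p := (α ^ 2 - 3 * β ^ 2) * t
  set q := (3 * α ^ 2 - β ^ 2) * t
  have hB : ∀ x, breather α β t x ^ 2 = 8 * breatherPotentialDeriv α β p q x ^ 2 := fun x => by
    have hd : breather α β t x = 2 * √2 * deriv (breatherPotential α β p q) x := rfl
    rw [hd, (hasDerivAt_breatherPotential hα.ne' x).deriv, mul_pow, mul_pow,
      sq_sqrt zero_le_two]
    ring
  rw [funext hB, integral_of_hasDerivAt_of_nonneg_of_tendsto
    (hasDerivAt_breatherMassPrimitive hα.ne') (fun x => by positivity)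
    (tendsto_breatherMassPrimitive_atBot hβ) (tendsto_breatherMassPrimitive_atTop hβ)]
  ring
end

section
/- Define f(x) = α² + β² + αβ sin(2αx) − β² cos(2αx) + α²(sinh(2βx) + cosh(2βx)) and g(x) = α² + β² + α² cosh(2βx) − β² cos(2αx), for α, β > 0. Then f'(x)g(x) − f(x)g'(x) = 2α²β · h(x), where h(x) = α² − β² + (α²+β²)(cos(2αx) + cosh(2βx)) + (α²−β²)cos(2αx)cosh(2βx) − 2αβ sin(2αx) sinh(2βx). -/
/-!
After substituting the explicit derivatives, `f'g - fg'` and the right-hand side are polynomials in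
`sin (2αx)`, `cos (2αx)`, `sinh (2βx)`, `cosh (2βx)` that agree modulo `sin² + cos² = 1` and
`cosh² - sinh² = 1`.
-/

open Real

section ScaledDerivatives

variable (c x : ℝ)

theorem hasDerivAt_sin_const_mul :
    HasDerivAt (fun y : ℝ => sin (c * y)) (cos (c * x) * c) x :=
  (hasDerivAt_const_mul c).sin

theorem hasDerivAt_cos_const_mul :
    HasDerivAt (fun y : ℝ => cos (c * y)) (-sin (c * x) * c) x :=
  (hasDerivAt_const_mul c).cos

theorem hasDerivAt_sinh_const_mul :
    HasDerivAt (fun y : ℝ => sinh (c * y)) (cosh (c * x) * c) x :=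
  (hasDerivAt_const_mul c).sinh

theorem hasDerivAt_cosh_const_mul :
    HasDerivAt (fun y : ℝ => cosh (c * y)) (sinh (c * x) * c) x :=
  (hasDerivAt_const_mul c).cosh

end ScaledDerivatives

section BreatherDerivatives

variable (α β x : ℝ)

theorem hasDerivAt_breather_numerator :
    HasDerivAt (fun y : ℝ => α ^ 2 + β ^ 2 + α * β * sin (2 * α * y) - β ^ 2 * cos (2 * α * y)
        + α ^ 2 * (sinh (2 * β * y) + cosh (2 * β * y)))
      (2 * α ^ 2 * β * cos (2 * α * x) + 2 * α * β ^ 2 * sin (2 * α * x)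
        + 2 * α ^ 2 * β * (cosh (2 * β * x) + sinh (2 * β * x))) x := by
  refine ((((hasDerivAt_const x (α ^ 2 + β ^ 2)).add
    ((hasDerivAt_sin_const_mul (2 * α) x).const_mul (α * β))).sub
    ((hasDerivAt_cos_const_mul (2 * α) x).const_mul (β ^ 2))).add
    (((hasDerivAt_sinh_const_mul (2 * β) x).add
      (hasDerivAt_cosh_const_mul (2 * β) x)).const_mul (α ^ 2))).congr_deriv ?_
  ring

theorem hasDerivAt_breather_denominator :
    HasDerivAt (fun y : ℝ => α ^ 2 + β ^ 2 + α ^ 2 * cosh (2 * β * y) - β ^ 2 * cos (2 * α * y))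
      (2 * α ^ 2 * β * sinh (2 * β * x) + 2 * α * β ^ 2 * sin (2 * α * x)) x := by
  refine (((hasDerivAt_const x (α ^ 2 + β ^ 2)).add
    ((hasDerivAt_cosh_const_mul (2 * β) x).const_mul (α ^ 2))).sub
    ((hasDerivAt_cos_const_mul (2 * α) x).const_mul (β ^ 2))).congr_deriv ?_
  ring

end BreatherDerivatives

theorem wronskian_identity_mass_general (α β : ℝ) (x : ℝ) :
    deriv (fun x : ℝ => α ^ 2 + β ^ 2 + α * β * Real.sin (2 * α * x)
        - β ^ 2 * Real.cos (2 * α * x)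
        + α ^ 2 * (Real.sinh (2 * β * x) + Real.cosh (2 * β * x))) x *
      (α ^ 2 + β ^ 2 + α ^ 2 * Real.cosh (2 * β * x) - β ^ 2 * Real.cos (2 * α * x))
    - (α ^ 2 + β ^ 2 + α * β * Real.sin (2 * α * x) - β ^ 2 * Real.cos (2 * α * x)
        + α ^ 2 * (Real.sinh (2 * β * x) + Real.cosh (2 * β * x))) *
      deriv (fun x : ℝ => α ^ 2 + β ^ 2 + α ^ 2 * Real.cosh (2 * β * x)
        - β ^ 2 * Real.cos (2 * α * x)) x
    = 2 * α ^ 2 * β *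
      (α ^ 2 - β ^ 2 + (α ^ 2 + β ^ 2) * (Real.cos (2 * α * x) + Real.cosh (2 * β * x))
        + (α ^ 2 - β ^ 2) * Real.cos (2 * α * x) * Real.cosh (2 * β * x)
        - 2 * α * β * Real.sin (2 * α * x) * Real.sinh (2 * β * x)) := by
  rw [(hasDerivAt_breather_numerator α β x).deriv, (hasDerivAt_breather_denominator α β x).deriv]
  linear_combination (-2 * α ^ 2 * β ^ 3) * sin_sq_add_cos_sq (2 * α * x)
    + 2 * α ^ 4 * β * cosh_sq_sub_sinh_sq (2 * β * x)

theorem wronskian_identity_mass (α β : ℝ) (hα : 0 < α) (hβ : 0 < β) (x : ℝ) :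
    deriv (fun x : ℝ => α ^ 2 + β ^ 2 + α * β * Real.sin (2 * α * x)
        - β ^ 2 * Real.cos (2 * α * x)
        + α ^ 2 * (Real.sinh (2 * β * x) + Real.cosh (2 * β * x))) x *
      (α ^ 2 + β ^ 2 + α ^ 2 * Real.cosh (2 * β * x) - β ^ 2 * Real.cos (2 * α * x))
    - (α ^ 2 + β ^ 2 + α * β * Real.sin (2 * α * x) - β ^ 2 * Real.cos (2 * α * x)
        + α ^ 2 * (Real.sinh (2 * β * x) + Real.cosh (2 * β * x))) *
      deriv (fun x : ℝ => α ^ 2 + β ^ 2 + α ^ 2 * Real.cosh (2 * β * x)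
        - β ^ 2 * Real.cos (2 * α * x)) x
    = 2 * α ^ 2 * β *
      (α ^ 2 - β ^ 2 + (α ^ 2 + β ^ 2) * (Real.cos (2 * α * x) + Real.cosh (2 * β * x))
        + (α ^ 2 - β ^ 2) * Real.cos (2 * α * x) * Real.cosh (2 * β * x)
        - 2 * α * β * Real.sin (2 * α * x) * Real.sinh (2 * β * x)) :=
  wronskian_identity_mass_general α β x
end

section
/- Let g(x) = α² + β² + α² cosh(2βy₂) − β² cos(2αy₁) and ĥ(x) = β² − (α²+β²)cos(2αy₁) − α² cos(2αy₁)cosh(2βy₂) + αβ sin(2αy₁)sinh(2βy₂), with y₁ = x+c₁, y₂ = x+c₂ linear shifts of x, α, β > 0. Then ∫_ℝ ĥ(x)/g(x)² dx = 0, since ĥ = −[g·((1/(2α))sin(2αy₁))' − ((1/(2α))sin(2αy₁))·g'], so ĥ/g² = −(sin(2αy₁)/(2α g))'. -/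
/-!
With `u = 2α(x + c₁)` and `v = 2β(x + c₂)`, the paper's identity
`ĥ = sin u · (αβ sinh v + β² sin u) - cos u · g` is exactly the quotient rule for
`F = -sin u / (2α g)`, so `ĥ / g² = F'`. Since `cos u ≤ 1`, `g ≥ α² (1 + cosh v)`, while
`|ĥ| ≤ (α² + 2β² + αβ) (1 + cosh v)`; hence both `F` and `F'` are dominated by a multiple of
`(1 + cosh v)⁻¹`, which is integrable, and the integral of the derivative of an integrable
function with integrable derivative vanishes.
-/

open Real MeasureTheory

lemma Real.one_add_sq_div_two_le_cosh (t : ℝ) : 1 + t ^ 2 / 2 ≤ cosh t := by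
  have hsinh : (t / 2) ^ 2 ≤ sinh (t / 2) ^ 2 := by
    rw [← sq_abs, ← sq_abs (sinh _), abs_sinh]
    exact pow_le_pow_left₀ (abs_nonneg _) (self_le_sinh_iff.2 (abs_nonneg _)) 2
  have hcosh : cosh t = 1 + 2 * sinh (t / 2) ^ 2 := by
    rw [← mul_div_cancel₀ t two_ne_zero, cosh_two_mul, cosh_sq',
      mul_div_cancel_left₀ _ two_ne_zero]
    ring
  linarith

lemma Real.abs_sinh_le_cosh (t : ℝ) : |sinh t| ≤ cosh t :=
  abs_le_of_sq_le_sq (by rw [cosh_sq]; linarith) (cosh_pos t).le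

lemma integrable_inv_one_add_cosh : Integrable fun t : ℝ => (1 + cosh t)⁻¹ := by
  refine (integrable_inv_one_add_sq.const_mul 2).mono' (by fun_prop) (ae_of_all _ fun t => ?_)
  calc ‖(1 + cosh t)⁻¹‖ = (1 + cosh t)⁻¹ := Real.norm_of_nonneg (by positivity)
    _ ≤ ((1 + t ^ 2) / 2)⁻¹ := inv_anti₀ (by positivity) (by linarith [one_add_sq_div_two_le_cosh t])
    _ = 2 * (1 + t ^ 2)⁻¹ := by rw [inv_div, div_eq_mul_inv]

lemma integrable_inv_one_add_cosh_mul_add {a : ℝ} (ha : a ≠ 0) (c : ℝ) :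
    Integrable fun x : ℝ => (1 + cosh (a * (x + c)))⁻¹ :=
  (integrable_inv_one_add_cosh.comp_mul_left' ha).comp_add_right c

noncomputable section

variable (α β u v : ℝ)

-- The paper's `g` and `ĥ`, as functions of `u = 2α y₁` and `v = 2β y₂`.
def denomG : ℝ := α ^ 2 + β ^ 2 + α ^ 2 * cosh v - β ^ 2 * cos u

def numerHat : ℝ :=
  β ^ 2 - (α ^ 2 + β ^ 2) * cos u - α ^ 2 * cos u * cosh v + α * β * sin u * sinh v

lemma sq_mul_one_add_cosh_le_denomG : α ^ 2 * (1 + cosh v) ≤ denomG α β u v := by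
  unfold denomG
  nlinarith [cos_le_one u, sq_nonneg β]

variable {α} in
lemma denomG_pos (hα : α ≠ 0) : 0 < denomG α β u v :=
  lt_of_lt_of_le (by positivity) (sq_mul_one_add_cosh_le_denomG α β u v)

lemma numerHat_eq :
    numerHat α β u v = sin u * (α * β * sinh v + β ^ 2 * sin u) - cos u * denomG α β u v := by
  unfold numerHat denomG
  linear_combination (-β ^ 2) * sin_sq_add_cos_sq u

lemma abs_numerHat_le : |numerHat α β u v| ≤ (α ^ 2 + 2 * β ^ 2 + |α * β|) * (1 + cosh v) := by
  have hCH := cosh_pos v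
  have hC := abs_le.1 (abs_cos_le_one u)
  have hCCH : |cos u * cosh v| ≤ cosh v := by
    rw [abs_mul, abs_of_pos hCH]
    exact mul_le_of_le_one_left hCH.le (abs_cos_le_one u)
  have hSSH : |α * β * (sin u * sinh v)| ≤ |α * β| * cosh v := by
    rw [abs_mul, abs_mul (sin u)]
    gcongr
    exact (mul_le_of_le_one_left (abs_nonneg _) (abs_sin_le_one u)).trans (abs_sinh_le_cosh v)
  have hα := mul_le_mul_of_nonneg_left (abs_le.1 hCCH).1 (sq_nonneg α)
  have hα' := mul_le_mul_of_nonneg_left (abs_le.1 hCCH).2 (sq_nonneg α)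
  have hαβ := mul_le_mul_of_nonneg_left hC.1 (by positivity : 0 ≤ α ^ 2 + β ^ 2)
  have hαβ' := mul_le_mul_of_nonneg_left hC.2 (by positivity : 0 ≤ α ^ 2 + β ^ 2)
  rw [abs_le]
  unfold numerHat
  constructor <;> linarith [abs_le.1 hSSH, sq_nonneg β, mul_nonneg (sq_nonneg β) hCH.le,
    abs_nonneg (α * β)]

variable {α} in
lemma abs_numerHat_div_denomG_sq_le (hα : α ≠ 0) :
    |numerHat α β u v / denomG α β u v ^ 2|
      ≤ (α ^ 2 + 2 * β ^ 2 + |α * β|) / α ^ 4 * (1 + cosh v)⁻¹ := by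
  calc |numerHat α β u v / denomG α β u v ^ 2|
      = |numerHat α β u v| / denomG α β u v ^ 2 := by
        rw [abs_div, abs_of_pos (pow_pos (denomG_pos β u v hα) 2)]
    _ ≤ (α ^ 2 + 2 * β ^ 2 + |α * β|) * (1 + cosh v) / (α ^ 2 * (1 + cosh v)) ^ 2 :=
        div_le_div₀ (by positivity) (abs_numerHat_le α β u v) (by positivity)
          (pow_le_pow_left₀ (by positivity) (sq_mul_one_add_cosh_le_denomG α β u v) 2)
    _ = (α ^ 2 + 2 * β ^ 2 + |α * β|) / α ^ 4 * (1 + cosh v)⁻¹ := by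
        field_simp

variable {α} in
lemma abs_sin_div_denomG_le (hα : α ≠ 0) :
    |sin u / (2 * α * denomG α β u v)| ≤ (2 * |α| ^ 3)⁻¹ * (1 + cosh v)⁻¹ := by
  calc |sin u / (2 * α * denomG α β u v)| = |sin u| / (2 * |α| * denomG α β u v) := by
        rw [abs_div, abs_mul, abs_mul, abs_two, abs_of_pos (denomG_pos β u v hα)]
    _ ≤ 1 / (2 * |α| * (α ^ 2 * (1 + cosh v))) :=
        div_le_div₀ zero_le_one (abs_sin_le_one u) (by positivity)
          (by gcongr; exact sq_mul_one_add_cosh_le_denomG α β u v)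
    _ = (2 * |α| ^ 3)⁻¹ * (1 + cosh v)⁻¹ := by
        rw [← sq_abs α]
        field_simp

end

variable {α β : ℝ} {u v : ℝ → ℝ} {x : ℝ} in
lemma hasDerivAt_neg_sin_div_denomG (hu : HasDerivAt u (2 * α) x)
    (hv : HasDerivAt v (2 * β) x) (hα : α ≠ 0) :
    HasDerivAt (fun x => -(sin (u x) / (2 * α * denomG α β (u x) (v x))))
      (numerHat α β (u x) (v x) / denomG α β (u x) (v x) ^ 2) x := by
  have hG : HasDerivAt (fun x => denomG α β (u x) (v x))
      (α ^ 2 * (sinh (v x) * (2 * β)) - β ^ 2 * (-sin (u x) * (2 * α))) x :=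
    ((hv.cosh.const_mul _).const_add _).sub (hu.cos.const_mul _)
  have hG₀ := denomG_pos β (u x) (v x) hα
  refine (hu.sin.div (hG.const_mul (2 * α)) (by positivity)).neg.congr_deriv ?_
  rw [numerHat_eq]
  field_simp
  ring

theorem hat_h_integral_zero (α β c₁ c₂ : ℝ) (hα : 0 < α) (hβ : 0 < β) :
    (∫ x : ℝ,
      (β ^ 2 - (α ^ 2 + β ^ 2) * Real.cos (2 * α * (x + c₁))
        - α ^ 2 * Real.cos (2 * α * (x + c₁)) * Real.cosh (2 * β * (x + c₂))
        + α * β * Real.sin (2 * α * (x + c₁)) * Real.sinh (2 * β * (x + c₂))) /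
      (α ^ 2 + β ^ 2 + α ^ 2 * Real.cosh (2 * β * (x + c₂))
        - β ^ 2 * Real.cos (2 * α * (x + c₁))) ^ 2) = 0 := by
  have hshift : ∀ (a c x : ℝ), HasDerivAt (fun x => a * (x + c)) a x := fun a c x => by
    simpa using ((hasDerivAt_id x).add_const c).const_mul a
  have hderiv := fun x => hasDerivAt_neg_sin_div_denomG (hshift (2 * α) c₁ x)
    (hshift (2 * β) c₂ x) hα.ne'
  have hdom := integrable_inv_one_add_cosh_mul_add (mul_ne_zero two_ne_zero hβ.ne') c₂
  refine integral_eq_zero_of_hasDerivAt_of_integrable hderiv ?_ ?_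
  · exact (hdom.const_mul _).mono' (Measurable.aestronglyMeasurable (by fun_prop))
      (ae_of_all _ fun x => abs_numerHat_div_denomG_sq_le β _ _ hα.ne')
  · exact (hdom.const_mul _).mono'
      (continuous_iff_continuousAt.2 fun x => (hderiv x).continuousAt).aestronglyMeasurable
      (ae_of_all _ fun x => (norm_neg _).trans_le (abs_sin_div_denomG_le β _ _ hα.ne'))
end

section
/- Let α, β > 0 and define k₃(x) = 8α³β³[β sin(2αy₁) − α sinh(2βy₂)] and g(x) = α²+β²+α² cosh(2βy₂) − β² cos(2αy₁), where y₁ = x+c₁, y₂ = x+c₂ are shifts. Then k₃'·g − 2k₃·g' = 16α⁴β⁴[cos(2αy₁) − cosh(2βy₂)]·g − 2k₃·g', and more precisely (k₃/g²)' = 16α⁴β⁴ k₂ / g³ where k₂ = α² sinh²(2βy₂) − β² sin²(2αy₁) − (α²+β²)(1 + cosh(2βy₂) − cos(2αy₁) − cos(2αy₁)cosh(2βy₂)). -/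
/-! Write `s, c` for `sin, cos (2α y₁)` and `S, C` for `sinh, cosh (2β y₂)`. Both derivatives are
computed by the chain rule, `k₃' = 16α⁴β⁴ (c - C)` and `g' = 2αβ (α S + β s)`, and `g ≥ 2α² > 0`
because `cosh ≥ 1 ≥ cos`. The quotient rule gives `(k₃ / g²)' = (k₃' g - 2 k₃ g') / g³`, and the
numerator reduces to `16α⁴β⁴ k₂` using only `s² + c² = 1` and `C² - S² = 1`. -/

theorem HasDerivAt.div_sq {f g : ℝ → ℝ} {f' g' x : ℝ} (hf : HasDerivAt f f' x)
    (hg : HasDerivAt g g' x) (hx : g x ≠ 0) :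
    HasDerivAt (fun y => f y / g y ^ 2) ((f' * g x - 2 * f x * g') / g x ^ 3) x := by
  refine (hf.fun_div (hg.fun_pow 2) (pow_ne_zero 2 hx)).congr_deriv ?_
  field_simp
  ring

theorem hasDerivAt_mul_add_const (a c x : ℝ) : HasDerivAt (fun y => a * (y + c)) a x := by
  simpa using ((hasDerivAt_id x).add_const c).const_mul a

theorem breather_wronskian_numerator {R : Type*} [CommRing R] (α β s c S C : R)
    (hsc : s ^ 2 + c ^ 2 = 1) (hSC : C ^ 2 - S ^ 2 = 1) :
    16 * α ^ 4 * β ^ 4 * (c - C) * (α ^ 2 + β ^ 2 + α ^ 2 * C - β ^ 2 * c)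
        - 2 * (8 * α ^ 3 * β ^ 3 * (β * s - α * S)) * (2 * α * β * (α * S + β * s))
      = 16 * α ^ 4 * β ^ 4 *
          (α ^ 2 * S ^ 2 - β ^ 2 * s ^ 2 - (α ^ 2 + β ^ 2) * (1 + C - c - c * C)) := by
  linear_combination (-(16 * α ^ 4 * β ^ 6)) * hsc + (-(16 * α ^ 6 * β ^ 4)) * hSC

namespace Breather

open Real

noncomputable def kernelNum (α β c₁ c₂ : ℝ) : ℝ → ℝ := fun x =>
  8 * α ^ 3 * β ^ 3 * (β * sin (2 * α * (x + c₁)) - α * sinh (2 * β * (x + c₂)))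

noncomputable def kernelDen (α β c₁ c₂ : ℝ) : ℝ → ℝ := fun x =>
  α ^ 2 + β ^ 2 + α ^ 2 * cosh (2 * β * (x + c₂)) - β ^ 2 * cos (2 * α * (x + c₁))

variable (α β c₁ c₂ x : ℝ)

theorem hasDerivAt_kernelNum :
    HasDerivAt (kernelNum α β c₁ c₂)
      (16 * α ^ 4 * β ^ 4 * (cos (2 * α * (x + c₁)) - cosh (2 * β * (x + c₂)))) x := by
  have hsin := (hasDerivAt_mul_add_const (2 * α) c₁ x).sin
  have hsinh := (hasDerivAt_mul_add_const (2 * β) c₂ x).sinh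
  exact (((hsin.const_mul β).fun_sub (hsinh.const_mul α)).const_mul (8 * α ^ 3 * β ^ 3)).congr_deriv
    (by ring)

theorem hasDerivAt_kernelDen :
    HasDerivAt (kernelDen α β c₁ c₂)
      (2 * α * β * (α * sinh (2 * β * (x + c₂)) + β * sin (2 * α * (x + c₁)))) x := by
  have hcos := (hasDerivAt_mul_add_const (2 * α) c₁ x).cos
  have hcosh := (hasDerivAt_mul_add_const (2 * β) c₂ x).cosh
  exact (((hcosh.const_mul (α ^ 2)).const_add (α ^ 2 + β ^ 2)).fun_sub
    (hcos.const_mul (β ^ 2))).congr_deriv (by ring)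

theorem kernelDen_pos (hα : α ≠ 0) : 0 < kernelDen α β c₁ c₂ x := by
  have hC : 1 ≤ cosh (2 * β * (x + c₂)) := one_le_cosh _
  have hc : cos (2 * α * (x + c₁)) ≤ 1 := cos_le_one _
  have hα2 : 0 < α ^ 2 := by positivity
  unfold kernelDen
  nlinarith [sq_nonneg β]

end Breather

theorem wronskian_quotient_identity_general (α β c₁ c₂ : ℝ) (hα : 0 < α) (x : ℝ) :
    (deriv (fun x : ℝ => 8 * α ^ 3 * β ^ 3 *
          (β * Real.sin (2 * α * (x + c₁)) - α * Real.sinh (2 * β * (x + c₂)))) x *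
        (α ^ 2 + β ^ 2 + α ^ 2 * Real.cosh (2 * β * (x + c₂))
          - β ^ 2 * Real.cos (2 * α * (x + c₁)))
      - 2 * (8 * α ^ 3 * β ^ 3 *
          (β * Real.sin (2 * α * (x + c₁)) - α * Real.sinh (2 * β * (x + c₂)))) *
        deriv (fun x : ℝ => α ^ 2 + β ^ 2 + α ^ 2 * Real.cosh (2 * β * (x + c₂))
          - β ^ 2 * Real.cos (2 * α * (x + c₁))) x
      = 16 * α ^ 4 * β ^ 4 *
          (Real.cos (2 * α * (x + c₁)) - Real.cosh (2 * β * (x + c₂))) *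
        (α ^ 2 + β ^ 2 + α ^ 2 * Real.cosh (2 * β * (x + c₂))
          - β ^ 2 * Real.cos (2 * α * (x + c₁)))
      - 2 * (8 * α ^ 3 * β ^ 3 *
          (β * Real.sin (2 * α * (x + c₁)) - α * Real.sinh (2 * β * (x + c₂)))) *
        deriv (fun x : ℝ => α ^ 2 + β ^ 2 + α ^ 2 * Real.cosh (2 * β * (x + c₂))
          - β ^ 2 * Real.cos (2 * α * (x + c₁))) x) ∧
    deriv (fun x : ℝ =>
        8 * α ^ 3 * β ^ 3 *
          (β * Real.sin (2 * α * (x + c₁)) - α * Real.sinh (2 * β * (x + c₂))) /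
        (α ^ 2 + β ^ 2 + α ^ 2 * Real.cosh (2 * β * (x + c₂))
          - β ^ 2 * Real.cos (2 * α * (x + c₁))) ^ 2) x
      = 16 * α ^ 4 * β ^ 4 *
          (α ^ 2 * Real.sinh (2 * β * (x + c₂)) ^ 2
            - β ^ 2 * Real.sin (2 * α * (x + c₁)) ^ 2
            - (α ^ 2 + β ^ 2) * (1 + Real.cosh (2 * β * (x + c₂))
                - Real.cos (2 * α * (x + c₁))
                - Real.cos (2 * α * (x + c₁)) * Real.cosh (2 * β * (x + c₂)))) /
        (α ^ 2 + β ^ 2 + α ^ 2 * Real.cosh (2 * β * (x + c₂))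
          - β ^ 2 * Real.cos (2 * α * (x + c₁))) ^ 3 := by
  have hk := Breather.hasDerivAt_kernelNum α β c₁ c₂ x
  have hg := Breather.hasDerivAt_kernelDen α β c₁ c₂ x
  have hq := hk.div_sq hg (Breather.kernelDen_pos α β c₁ c₂ x hα.ne').ne'
  unfold Breather.kernelNum at hk
  unfold Breather.kernelNum Breather.kernelDen at hq
  refine ⟨by rw [hk.deriv], ?_⟩
  rw [hq.deriv, breather_wronskian_numerator _ _ _ _ _ _
    (Real.sin_sq_add_cos_sq _) (Real.cosh_sq_sub_sinh_sq _)]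

theorem wronskian_quotient_identity (α β c₁ c₂ : ℝ) (hα : 0 < α) (hβ : 0 < β) (x : ℝ) :
    (deriv (fun x : ℝ => 8 * α ^ 3 * β ^ 3 *
          (β * Real.sin (2 * α * (x + c₁)) - α * Real.sinh (2 * β * (x + c₂)))) x *
        (α ^ 2 + β ^ 2 + α ^ 2 * Real.cosh (2 * β * (x + c₂))
          - β ^ 2 * Real.cos (2 * α * (x + c₁)))
      - 2 * (8 * α ^ 3 * β ^ 3 *
          (β * Real.sin (2 * α * (x + c₁)) - α * Real.sinh (2 * β * (x + c₂)))) *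
        deriv (fun x : ℝ => α ^ 2 + β ^ 2 + α ^ 2 * Real.cosh (2 * β * (x + c₂))
          - β ^ 2 * Real.cos (2 * α * (x + c₁))) x
      = 16 * α ^ 4 * β ^ 4 *
          (Real.cos (2 * α * (x + c₁)) - Real.cosh (2 * β * (x + c₂))) *
        (α ^ 2 + β ^ 2 + α ^ 2 * Real.cosh (2 * β * (x + c₂))
          - β ^ 2 * Real.cos (2 * α * (x + c₁)))
      - 2 * (8 * α ^ 3 * β ^ 3 *
          (β * Real.sin (2 * α * (x + c₁)) - α * Real.sinh (2 * β * (x + c₂)))) *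
        deriv (fun x : ℝ => α ^ 2 + β ^ 2 + α ^ 2 * Real.cosh (2 * β * (x + c₂))
          - β ^ 2 * Real.cos (2 * α * (x + c₁))) x) ∧
    deriv (fun x : ℝ =>
        8 * α ^ 3 * β ^ 3 *
          (β * Real.sin (2 * α * (x + c₁)) - α * Real.sinh (2 * β * (x + c₂))) /
        (α ^ 2 + β ^ 2 + α ^ 2 * Real.cosh (2 * β * (x + c₂))
          - β ^ 2 * Real.cos (2 * α * (x + c₁))) ^ 2) x
      = 16 * α ^ 4 * β ^ 4 *
          (α ^ 2 * Real.sinh (2 * β * (x + c₂)) ^ 2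
            - β ^ 2 * Real.sin (2 * α * (x + c₁)) ^ 2
            - (α ^ 2 + β ^ 2) * (1 + Real.cosh (2 * β * (x + c₂))
                - Real.cos (2 * α * (x + c₁))
                - Real.cos (2 * α * (x + c₁)) * Real.cosh (2 * β * (x + c₂)))) /
        (α ^ 2 + β ^ 2 + α ^ 2 * Real.cosh (2 * β * (x + c₂))
          - β ^ 2 * Real.cos (2 * α * (x + c₁))) ^ 3 :=
  wronskian_quotient_identity_general α β c₁ c₂ hα x
end
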